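/- Let λ be a partition with at most n+1 parts, μ a partition, and β a partition all of whose column lengths are even. Then c^λ_{μ,β}(n) equals the ordinary Littlewood–Richardson coefficient c^λ_{μ,β}, i.e. the number of skew semistandard Young tableaux of shape λ/μ whose reverse reading word is a lattice permutation of weight β. -/

import Mathlib

/- Common definitions: partitions, oscillating tableaux, quasisymmetric and
symmetric functions, tableau algorithms (Robinson–Schensted insertion,
Sundaram's correspondences), the symplectic group side, growth diagrams. -/

open scoped Classical

noncomputable section

/-- A partition, represented by its weakly decreasing sequence of parts
(indexed from 0), eventually zero. -/
structure Ptn where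
  parts : ℕ → ℕ
  antitone : ∀ i j, i ≤ j → parts j ≤ parts i
  finite : ∃ N, parts N = 0

/-- The number of (nonzero) rows of a partition. -/
def Ptn.numRows (p : Ptn) : ℕ := Nat.find p.finite

/-- The size `|p|` of a partition: the sum of its parts. -/
def Ptn.size (p : Ptn) : ℕ := ∑ i ∈ Finset.range p.numRows, p.parts i

/-- The empty partition. -/
def emptyPtn : Ptn := ⟨fun _ => 0, fun _ _ _ => le_rfl, ⟨0, rfl⟩⟩

lemma Ptn.parts_eventually_zero (p : Ptn) {i : ℕ} (h : Nat.find p.finite ≤ i) :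
    p.parts i = 0 :=
  Nat.le_zero.mp ((Nat.find_spec p.finite ▸ p.antitone _ _ h))

lemma Ptn.setOf_lt_parts_finite (p : Ptn) (j : ℕ) : {i : ℕ | j < p.parts i}.Finite := by
  apply Set.Finite.subset (Set.finite_Iio (Nat.find p.finite))
  intro i hi
  simp only [Set.mem_setOf_eq] at hi
  simp only [Set.mem_Iio]
  by_contra hcon
  push_neg at hcon
  rw [p.parts_eventually_zero hcon] at hi
  omega

/-- The conjugate (transpose) partition: the `j`-th part of `p.conj` is the
length of the `j`-th column of `p`. -/
def Ptn.conj (p : Ptn) : Ptn where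
  parts := fun j => Nat.card {i : ℕ | j < p.parts i}
  antitone := by
    intro j j' hjj'
    exact Nat.card_mono (p.setOf_lt_parts_finite j)
      (fun i hi => lt_of_le_of_lt hjj' hi)
  finite := by
    refine ⟨p.parts 0, ?_⟩
    have h : {i : ℕ | p.parts 0 < p.parts i} = ∅ := by
      ext i
      simp only [Set.mem_setOf_eq, Set.mem_empty_iff_false, iff_false, not_lt]
      exact p.antitone 0 i (Nat.zero_le i)
    show Nat.card {i : ℕ | p.parts 0 < p.parts i} = 0
    rw [h]
    simp

/-- All columns of the partition have even length. -/
def Ptn.EvenCols (p : Ptn) : Prop := ∀ j, Even (p.conj.parts j)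

/-- `ExpandStep μ ν i` holds when `ν` is obtained from `μ` by adding one box
in row `i` (rows indexed from 0). -/
def ExpandStep (μ ν : Ptn) (i : ℕ) : Prop :=
  ν.parts = Function.update μ.parts i (μ.parts i + 1)

/-- `ν` covers `μ` in Young's lattice. -/
def CoveredBy (μ ν : Ptn) : Prop := ∃ i, ExpandStep μ ν i

/-- Two partitions joined by an edge of a growth diagram: equal or covering. -/
def EdgeRel (μ ν : Ptn) : Prop := μ = ν ∨ CoveredBy μ ν

/-- The union (pointwise maximum) of two partitions. -/
def unionPtn (μ ν : Ptn) : Ptn where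
  parts := fun i => max (μ.parts i) (ν.parts i)
  antitone := fun i j hij => max_le_max (μ.antitone i j hij) (ν.antitone i j hij)
  finite := by
    obtain ⟨N₁, h₁⟩ := μ.finite
    obtain ⟨N₂, h₂⟩ := ν.finite
    refine ⟨max N₁ N₂, ?_⟩
    show max (μ.parts (max N₁ N₂)) (ν.parts (max N₁ N₂)) = 0
    have hμ := μ.antitone N₁ (max N₁ N₂) (le_max_left _ _)
    have hν := ν.antitone N₂ (max N₁ N₂) (le_max_right _ _)
    omega
-- ==== oscillating tableaux ====

/-- An oscillating tableau of length `r`: a sequence of `r+1` partitions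
starting at the empty partition, consecutive ones differing by one box. -/
structure OscTab (r : ℕ) where
  seq : Fin (r + 1) → Ptn
  init : (seq 0).parts = fun _ => 0
  steps : ∀ k : Fin r,
    (∃ i, ExpandStep (seq k.castSucc) (seq k.succ) i) ∨
    (∃ i, ExpandStep (seq k.succ) (seq k.castSucc) i)

/-- The `k`-th partition of an oscillating tableau (with `ℕ` index). -/
def OscTab.entry {r : ℕ} (T : OscTab r) (k : ℕ) : Ptn :=
  T.seq ⟨min k r, Nat.lt_succ_of_le (min_le_right k r)⟩

/-- The final shape of an oscillating tableau. -/
def OscTab.shape {r : ℕ} (T : OscTab r) : Ptn := T.entry r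

/-- The oscillating tableau is `n`-symplectic: all partitions have at most
`n` nonzero parts. -/
def OscTab.Symplectic {r : ℕ} (T : OscTab r) (n : ℕ) : Prop :=
  ∀ k, (T.entry k).parts n = 0

/-- `k` is a descent of the oscillating tableau `T` (steps are numbered
`1, …, r`; step `k` goes from the `(k-1)`-st partition to the `k`-th). -/
def OscTab.IsDescent {r : ℕ} (T : OscTab r) (k : ℕ) : Prop :=
  1 ≤ k ∧ k + 1 ≤ r ∧
  ((∃ i j, ExpandStep (T.entry (k-1)) (T.entry k) i ∧
           ExpandStep (T.entry (k+1)) (T.entry k) j) ∨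
   (∃ i j, ExpandStep (T.entry (k-1)) (T.entry k) i ∧
           ExpandStep (T.entry k) (T.entry (k+1)) j ∧ i < j) ∨
   (∃ i j, ExpandStep (T.entry k) (T.entry (k-1)) i ∧
           ExpandStep (T.entry (k+1)) (T.entry k) j ∧ j < i))

/-- The descent set of an oscillating tableau. -/
def OscTab.des {r : ℕ} (T : OscTab r) : Set ℕ := {k | T.IsDescent k}

-- ==== quasisymmetric and symmetric functions ====

/-- The fundamental quasisymmetric function `F_D` of degree `r`, as a formal
power series in the variables `x_0, x_1, x_2, …`. -/
def fundQS (r : ℕ) (D : Set ℕ) : MvPowerSeries ℕ ℂ :=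
  fun m => (Nat.card {f : Fin r → ℕ //
    (∀ j k : Fin r, j ≤ k → f j ≤ f k) ∧
    (∀ k, k ∈ D → ∀ hk : k < r,
      f ⟨k - 1, Nat.lt_of_le_of_lt (Nat.sub_le k 1) hk⟩ < f ⟨k, hk⟩) ∧
    (∀ v, m v = (Finset.univ.filter (fun j => f j = v)).card)} : ℂ)

/-- The cells of the Young diagram of a partition. -/
def PtnCell (lam : Ptn) : Type := {c : ℕ × ℕ // c.2 < lam.parts c.1}

/-- The Schur function `s_λ`, defined combinatorially as the generating
function of semistandard Young tableaux of shape `λ`. -/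
def schur (lam : Ptn) : MvPowerSeries ℕ ℂ :=
  fun m => (Nat.card {T : PtnCell lam → ℕ //
    (∀ c c' : PtnCell lam, c.1.1 = c'.1.1 → c.1.2 ≤ c'.1.2 → T c ≤ T c') ∧
    (∀ c c' : PtnCell lam, c.1.2 = c'.1.2 → c.1.1 < c'.1.1 → T c < T c') ∧
    (∀ v, m v = Nat.card {c : PtnCell lam // T c = v})} : ℂ)

/-- The power sum symmetric function `p_k`. -/
def powerSum (k : ℕ) : MvPowerSeries ℕ ℂ :=
  fun m => if ∃ v, m = Finsupp.single v k then 1 else 0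

/-- The power sum symmetric function `p_{λ(σ)}` attached to the cycle type
(including fixed points) of a permutation `σ` of `r` letters. -/
def cyclePS {r : ℕ} (σ : Equiv.Perm (Fin r)) : MvPowerSeries ℕ ℂ :=
  (σ.cycleType.map powerSum).prod * powerSum 1 ^ (r - σ.cycleType.sum)
-- ==== skew tableaux and Littlewood-Richardson coefficients ====

/-- `(i, j)` is a cell of the skew shape `λ/μ` (rows and columns from 0). -/
def InSkewShape (lam mu : Ptn) (i j : ℕ) : Prop :=
  mu.parts i ≤ j ∧ j < lam.parts i

/-- A skew semistandard Young tableau of shape `λ/μ` with entries in the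
positive integers, encoded as a function which is `0` outside the shape. -/
def IsSkewSSYT (lam mu : Ptn) (T : ℕ → ℕ → ℕ) : Prop :=
  (∀ i, mu.parts i ≤ lam.parts i) ∧
  (∀ i j, ¬ InSkewShape lam mu i j → T i j = 0) ∧
  (∀ i j, InSkewShape lam mu i j → 1 ≤ T i j) ∧
  (∀ i j j', InSkewShape lam mu i j → InSkewShape lam mu i j' → j ≤ j' → T i j ≤ T i j') ∧
  (∀ i i' j, InSkewShape lam mu i j → InSkewShape lam mu i' j → i < i' → T i j < T i' j)

/-- The reverse reading word of a skew tableau: rows read from top to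
bottom, each row from right to left. -/
def revWord (lam mu : Ptn) (T : ℕ → ℕ → ℕ) : List ℕ :=
  (((List.range lam.numRows).map (fun i =>
    (List.range (lam.parts i - mu.parts i)).map
      (fun t => T i (lam.parts i - 1 - t))))).flatten

/-- A word in the positive integers is a lattice permutation: every prefix
contains at least as many `i`'s as `(i+1)`'s. -/
def IsLatticeWord (w : List ℕ) : Prop :=
  ∀ k i, (w.take k).count (i + 2) ≤ (w.take k).count (i + 1)

/-- The word `w` has weight `β`: the letter `i` occurs `β_i` times. -/
def HasWeight (w : List ℕ) (β : Ptn) : Prop :=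
  ∀ i, w.count (i + 1) = β.parts i

/-- `T` is an `n`-symplectic Littlewood–Richardson tableau of shape `λ/μ`
and weight `β`. -/
def IsSymplecticLR (n : ℕ) (lam mu beta : Ptn) (T : ℕ → ℕ → ℕ) : Prop :=
  IsSkewSSYT lam mu T ∧
  IsLatticeWord (revWord lam mu T) ∧
  HasWeight (revWord lam mu T) beta ∧
  beta.EvenCols ∧
  (∀ i j, InSkewShape lam mu (n + i) j → 2 * i + 2 ≤ T (n + i) j)

/-- The number `c^λ_{μ,β}(n)` of `n`-symplectic Littlewood–Richardson
tableaux of shape `λ/μ` and weight `β`. -/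
def lrCoeffS (n : ℕ) (lam mu beta : Ptn) : ℕ :=
  Nat.card {T : ℕ → ℕ → ℕ // IsSymplecticLR n lam mu beta T}

/-- The ordinary Littlewood–Richardson coefficient `c^λ_{μ,β}`. -/
def lrCoeffOrd (lam mu beta : Ptn) : ℕ :=
  Nat.card {T : ℕ → ℕ → ℕ // IsSkewSSYT lam mu T ∧
    IsLatticeWord (revWord lam mu T) ∧ HasWeight (revWord lam mu T) beta}

-- ==== words in the symplectic crystal ====

/-- The letters `1 < 2 < ⋯ < n < -n < ⋯ < -1` of the symplectic crystal:
`Sum.inl i` is the letter `i+1` and `Sum.inr i` is the letter `-(i+1)`. -/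
abbrev Letter (n : ℕ) := Fin n ⊕ Fin n

/-- The rank of a letter in the crystal order
`1 < 2 < ⋯ < n < -n < ⋯ < -1`. -/
def rankL {n : ℕ} : Letter n → ℕ
  | Sum.inl i => (i : ℕ)
  | Sum.inr i => 2 * n - 1 - (i : ℕ)

/-- The `i`-th coordinate of the weight of the prefix of length `k` of the
word `w`: the number of letters `i+1` minus the number of letters `-(i+1)`. -/
def wordWt {n r : ℕ} (w : Fin r → Letter n) (k : ℕ) (i : Fin n) : ℤ :=
  ((Finset.univ.filter (fun t : Fin r => (t : ℕ) < k ∧ w t = Sum.inl i)).card : ℤ) -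
  ((Finset.univ.filter (fun t : Fin r => (t : ℕ) < k ∧ w t = Sum.inr i)).card : ℤ)

/-- `w` is a highest weight word: the weight of every prefix is a partition. -/
def IsHighestWeightWord {n r : ℕ} (w : Fin r → Letter n) : Prop :=
  ∀ k, k ≤ r → (∀ i j : Fin n, i ≤ j → wordWt w k j ≤ wordWt w k i) ∧
    (∀ i : Fin n, 0 ≤ wordWt w k i)

/-- The descent set of a word (positions `k ∈ {1,…,r-1}` where the `k`-th
letter strictly precedes the `(k+1)`-st in the crystal order). -/
def wordDes {n r : ℕ} (w : Fin r → Letter n) : Set ℕ :=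
  {k | 1 ≤ k ∧ ∃ hk : k < r,
    rankL (w ⟨k - 1, Nat.lt_of_le_of_lt (Nat.sub_le k 1) hk⟩) < rankL (w ⟨k, hk⟩)}
-- ==== the representation-theoretic side ====

/-- Basis words for the `r`-th tensor power of the defining representation
of `Sp(2n)`: the letter `Sum.inl i` stands for `e_{i+1}`, the letter
`Sum.inr i` for `e_{-(i+1)}`. -/
abbrev TWord (n r : ℕ) := Fin r → Letter n

/-- The `r`-th tensor power of the defining representation `V = ℂ^{2n}`,
realized as the space of coefficient functions on basis words. -/
abbrev TPow (n r : ℕ) := TWord n r → ℂ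

/-- The action of a matrix `X ∈ gl(2n)` on the tensor power as a derivation
(sum over the tensor positions); this is the Lie algebra action. -/
def derivAction (n r : ℕ) (X : Matrix (Letter n) (Letter n) ℂ) :
    TPow n r →ₗ[ℂ] TPow n r where
  toFun f := fun g => ∑ k : Fin r, ∑ b : Letter n,
    X (g k) b * f (Function.update g k b)
  map_add' f₁ f₂ := by
    funext g
    simp only [Pi.add_apply, mul_add, Finset.sum_add_distrib]
  map_smul' c f := by
    funext g
    simp only [Pi.smul_apply, smul_eq_mul, RingHom.id_apply, Finset.mul_sum]
    exact Finset.sum_congr rfl fun k _ => Finset.sum_congr rfl fun b _ => by ring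

/-- The raising operators (simple positive root vectors) of `sp(2n)`:
`e_i = E_{i,i+1} - E_{-(i+1),-i}` for `1 ≤ i < n`, and `e_n = E_{n,-n}`. -/
def IsRaising (n : ℕ) (X : Matrix (Letter n) (Letter n) ℂ) : Prop :=
  (∃ i j : Fin n, (j : ℕ) = (i : ℕ) + 1 ∧
    X = Matrix.single (Sum.inl i) (Sum.inl j) 1 -
        Matrix.single (Sum.inr j) (Sum.inr i) 1) ∨
  (∃ i : Fin n, (i : ℕ) = n - 1 ∧
    X = Matrix.single (Sum.inl i) (Sum.inr i) 1)

/-- A basis word has weight `μ`. -/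
def WordHasWt {n r : ℕ} (g : TWord n r) (μ : Ptn) : Prop :=
  ∀ i : Fin n, wordWt g r i = (μ.parts (i : ℕ) : ℤ)

/-- The space of highest weight vectors of weight `μ` in the tensor power:
vectors supported on words of weight `μ` which are annihilated by all
raising operators of `sp(2n)`.  As an `𝔖_r`-module this is canonically
isomorphic to the isotypic multiplicity space `U(r,μ)`. -/
def hwSubmodule (n r : ℕ) (μ : Ptn) : Submodule ℂ (TPow n r) where
  carrier := {f | (∀ g, ¬ WordHasWt g μ → f g = 0) ∧
    (∀ X, IsRaising n X → derivAction n r X f = 0)}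
  add_mem' := by
    rintro a b ⟨ha1, ha2⟩ ⟨hb1, hb2⟩
    refine ⟨fun g hg => ?_, fun X hX => ?_⟩
    · simp [Pi.add_apply, ha1 g hg, hb1 g hg]
    · rw [map_add, ha2 X hX, hb2 X hX, add_zero]
  zero_mem' := ⟨fun g _ => rfl, fun X _ => map_zero _⟩
  smul_mem' := by
    rintro c f ⟨hf1, hf2⟩
    refine ⟨fun g hg => ?_, fun X hX => ?_⟩
    · simp [Pi.smul_apply, hf1 g hg]
    · rw [map_smul, hf2 X hX, smul_zero]

/-- The (right) action of a permutation on the tensor power by permuting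
tensor coordinates. -/
def permAction (n r : ℕ) (σ : Equiv.Perm (Fin r)) : TPow n r →ₗ[ℂ] TPow n r :=
  LinearMap.funLeft ℂ ℂ (fun g : TWord n r => g ∘ σ)

lemma wordWt_comp_perm {n r : ℕ} (g : TWord n r) (σ : Equiv.Perm (Fin r)) (i : Fin n) :
    wordWt (g ∘ σ) r i = wordWt g r i := by
  unfold wordWt
  congr 1 <;>
  · congr 1
    apply Finset.card_equiv σ
    intro t
    simp [Fin.is_lt]

lemma update_comp_perm {n r : ℕ} (g : TWord n r) (σ : Equiv.Perm (Fin r))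
    (k : Fin r) (b : Letter n) :
    (Function.update g (σ k) b) ∘ σ = Function.update (g ∘ σ) k b := by
  funext x
  rcases eq_or_ne x k with rfl | h
  · simp
  · have h' : σ x ≠ σ k := fun hc => h (σ.injective hc)
    simp only [Function.comp_apply, Function.update_of_ne h, Function.update_of_ne h']

lemma derivAction_comm {n r : ℕ} (X : Matrix (Letter n) (Letter n) ℂ)
    (σ : Equiv.Perm (Fin r)) (f : TPow n r) :
    derivAction n r X (permAction n r σ f) = permAction n r σ (derivAction n r X f) := by
  funext g
  show (∑ k : Fin r, ∑ b : Letter n,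
      X (g k) b * f ((Function.update g k b) ∘ σ)) =
    ∑ k : Fin r, ∑ b : Letter n,
      X ((g ∘ σ) k) b * f (Function.update (g ∘ σ) k b)
  refine (Fintype.sum_equiv σ _ _ (fun k => ?_)).symm
  refine Finset.sum_congr rfl fun b _ => ?_
  rw [Function.comp_apply, update_comp_perm]

lemma permAction_mem_hw {n r : ℕ} (μ : Ptn) (σ : Equiv.Perm (Fin r)) :
    ∀ f ∈ hwSubmodule n r μ, permAction n r σ f ∈ hwSubmodule n r μ := by
  rintro f ⟨hf1, hf2⟩
  constructor
  · intro g hg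
    apply hf1
    intro hc
    apply hg
    intro i
    rw [← wordWt_comp_perm g σ i]
    exact hc i
  · intro X hX
    rw [derivAction_comm, hf2 X hX, map_zero]

/-- The Frobenius characteristic of the isotypic multiplicity space
`U(r,μ)` of `⊗^r V`, `V` the defining representation of `Sp(2n)`:
`ch U(r,μ) = (1/r!) ∑_σ Tr(σ | U(r,μ)) p_{λ(σ)}`, computed on the model
of `U(r,μ)` given by the highest weight vectors of weight `μ`. -/
def chU (n r : ℕ) (μ : Ptn) : MvPowerSeries ℕ ℂ :=
  ((r.factorial : ℂ)⁻¹) • ∑ σ : Equiv.Perm (Fin r),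
    (LinearMap.trace ℂ (hwSubmodule n r μ)
      ((permAction n r σ).restrict (permAction_mem_hw μ σ))) • cyclePS σ
-- ==== tableaux as lists of rows, and insertion algorithms ====

/-- The transpose of a (left-justified, Young-diagram shaped) list of rows. -/
def transposeLL (T : List (List ℕ)) : List (List ℕ) :=
  (List.range (T.headD []).length).map (fun j => T.filterMap (fun row => row[j]?))

/-- Robinson–Schensted row insertion of `x` (entries distinct). -/
def rowInsert (x : ℕ) : List (List ℕ) → List (List ℕ)
  | [] => [[x]]
  | row :: rest =>
    let i := row.findIdx (fun y => decide (x < y))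
    if i < row.length then row.set i x :: rowInsert (row.getD i 0) rest
    else (row ++ [x]) :: rest

/-- Column insertion of `x` (entries distinct). -/
def colInsert (x : ℕ) (T : List (List ℕ)) : List (List ℕ) :=
  transposeLL (rowInsert x (transposeLL T))

/-- Column-insert a word, from left to right, into the tableau `T`. -/
def colInsertWord (w : List ℕ) (T : List (List ℕ)) : List (List ℕ) :=
  w.foldl (fun acc x => colInsert x acc) T

/-- Reverse bumping through one row: `y` replaces the largest entry smaller
than `y`, which is bumped out. -/
def reverseBumpRow (y : ℕ) (row : List ℕ) : ℕ × List ℕ :=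
  let i := (row.filter (fun z => decide (z < y))).length - 1
  (row.getD i 0, row.set i y)

/-- Reverse bumping upwards through rows `j-1, j-2, …, 0`. -/
def bumpUpFrom : ℕ → List (List ℕ) → ℕ → ℕ × List (List ℕ)
  | y, T, 0 => (y, T)
  | y, T, (j+1) =>
    let p := reverseBumpRow y (T.getD j [])
    bumpUpFrom p.1 (T.set j p.2) j

/-- Remove empty rows. -/
def trimTab (T : List (List ℕ)) : List (List ℕ) := T.filter (fun row => decide (row ≠ []))

/-- Row deletion (inverse row insertion) starting at the last cell of row `i`,
returning the bumped-out entry and the remaining tableau. -/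
def rowDelete (T : List (List ℕ)) (i : ℕ) : ℕ × List (List ℕ) :=
  let row := T.getD i []
  let y := row.getLastD 0
  bumpUpFrom y (T.set i row.dropLast) i

/-- Column deletion (inverse column insertion) starting at the last cell of
row `i`, returning the bumped-out entry and the remaining tableau. -/
def colDelete (T : List (List ℕ)) (i : ℕ) : ℕ × List (List ℕ) :=
  let j := (T.getD i []).length - 1
  let p := rowDelete (transposeLL T) j
  (p.1, transposeLL (trimTab p.2))

/-- Append the entry `x` at the end of row `i`. -/
def placeAt (T : List (List ℕ)) (i x : ℕ) : List (List ℕ) :=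
  if i < T.length then T.set i (T.getD i [] ++ [x]) else T ++ [[x]]

/-- The multiset (list) of entries of a tableau. -/
def entriesOf (T : List (List ℕ)) : List ℕ := T.flatten

/-- The index of the row containing `x`. -/
def rowOf (T : List (List ℕ)) (x : ℕ) : ℕ := T.findIdx (fun row => row.contains x)

/-- The descent set of a partial tableau: `k` such that `k` and `k+1` are
both entries and `k+1` is in a strictly lower row. -/
def tabDes (T : List (List ℕ)) : Set ℕ :=
  {k | k ∈ entriesOf T ∧ (k+1) ∈ entriesOf T ∧ rowOf T k < rowOf T (k+1)}

/-- `T` is a partial Young tableau: a filling of a Ferrers shape by distinct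
positive integers, increasing along rows and columns. -/
def IsPartialTableau (T : List (List ℕ)) : Prop :=
  (∀ row ∈ T, row ≠ []) ∧
  (∀ i, (T.getD (i+1) []).length ≤ (T.getD i []).length) ∧
  (∀ i, (T.getD i []).Chain' (· < ·)) ∧
  (∀ i j, j < (T.getD (i+1) []).length →
    (T.getD i []).getD j 0 < (T.getD (i+1) []).getD j 0) ∧
  (∀ x ∈ entriesOf T, 1 ≤ x) ∧ (entriesOf T).Nodup

/-- The shape of the tableau `T` is the partition `μ`. -/
def shapeMatches (T : List (List ℕ)) (μ : Ptn) : Prop :=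
  ∀ i, (T.getD i []).length = μ.parts i

/-- `T` is a standard Young tableau with entries `1, …, r`. -/
def IsSYT (T : List (List ℕ)) (r : ℕ) : Prop :=
  IsPartialTableau T ∧ ∀ x, x ∈ entriesOf T ↔ (1 ≤ x ∧ x ≤ r)

/-- The index of the row in which `T'` (obtained from `T` by adding a box)
is longer than `T`. -/
def newRowIdx (T T' : List (List ℕ)) : ℕ :=
  sInf {i | (T.getD i []).length ≠ (T'.getD i []).length}

/-- The Robinson–Schensted pair `(P, Q)` of a word (insertion tableau and
standard recording tableau). -/
def rsAux : List ℕ → ℕ → List (List ℕ) × List (List ℕ) → List (List ℕ) × List (List ℕ)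
  | [], _, PQ => PQ
  | x :: xs, k, (P, Q) =>
    let P' := rowInsert x P
    rsAux xs (k+1) (P', placeAt Q (newRowIdx P P') k)

def rsPair (w : List ℕ) : List (List ℕ) × List (List ℕ) := rsAux w 1 ([], [])

-- ==== Sundaram's correspondences ====

/-- Sundaram's first bijection `Sun₁`, mapping an oscillating tableau to a
pair (list of transpositions of a fixed-point-free involution, partial
Young tableau). -/
def sun1 {r : ℕ} (T : OscTab r) : List (ℕ × ℕ) × List (List ℕ) :=
  (List.range r).foldl (fun st k =>
    let μ := T.entry k
    let ν := T.entry (k+1)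
    let i := sInf {j | μ.parts j ≠ ν.parts j}
    if μ.size < ν.size then (st.1, placeAt st.2 i (k+1))
    else
      let p := colDelete st.2 i
      (st.1 ++ [(p.1, k+1)], p.2)) ([], [])

/-- The involution encoded by a list of transpositions (identity off the
entries of the list). -/
def invOfPairs (L : List (ℕ × ℕ)) : ℕ → ℕ := fun x =>
  match L.find? (fun p => (p.1 == x) || (p.2 == x)) with
  | none => x
  | some p => if p.1 = x then p.2 else p.1

/-- The non-fixed points of `ι` inside `{1, …, r}`, in increasing order. -/
def sortedDomain (ι : ℕ → ℕ) (r : ℕ) : List ℕ :=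
  ((Finset.Icc 1 r).filter (fun x => ι x ≠ x)).sort (· ≤ ·)

/-- The pair `(I, T)`: the Robinson–Schensted insertion tableau of the
fixed-point-free involution produced by `Sun₁`, together with the partial
tableau produced by `Sun₁`. -/
def ITpair {r : ℕ} (𝒯 : OscTab r) : List (List ℕ) × List (List ℕ) :=
  let L := (sun1 𝒯).1
  let ι := invOfPairs L
  ((rsPair ((sortedDomain ι r).map ι)).1, (sun1 𝒯).2)

/-- Sundaram's second map `Sun₂`: column-insert the reverse reading word of
`I` into `T`, recording in `S` the row index (in `I`) of each inserted
letter. -/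
def wrev (T : List (List ℕ)) : List ℕ := (T.map List.reverse).flatten

def sun2 (I T : List (List ℕ)) : List (List ℕ) × List (List ℕ) :=
  (wrev I).foldl (fun QS x =>
    let Q' := colInsert x QS.1
    (Q', placeAt QS.2 (newRowIdx QS.1 Q') (rowOf I x + 1)))
    (T, T.map (List.map (fun _ => 0)))

/-- The full Sundaram correspondence `Sun : 𝒯 ↦ (Q, S)`. -/
def sunFull {r : ℕ} (𝒯 : OscTab r) : List (List ℕ) × List (List ℕ) :=
  sun2 (ITpair 𝒯).1 (ITpair 𝒯).2

/-- The descent set of an involution `ι` (identity off its domain). -/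
def invDes (ι : ℕ → ℕ) : Set ℕ :=
  {k | ι k ≠ k ∧ ι (k+1) ≠ k+1 ∧ ι (k+1) < ι k}

/-- `Des(T/ι)`: `k` an entry of `T` with `k+1` in the domain of `ι`. -/
def desTI (T : List (List ℕ)) (ι : ℕ → ℕ) : Set ℕ :=
  {k | k ∈ entriesOf T ∧ ι (k+1) ≠ k+1}

/-- `Des(A/B)` for the entry sets of two tableaux. -/
def desTabTab (T I : List (List ℕ)) : Set ℕ :=
  {k | k ∈ entriesOf T ∧ (k+1) ∈ entriesOf I}

/-- The position (0-based) of the first occurrence of `x` in `w`. -/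
def posOf (w : List ℕ) (x : ℕ) : ℕ := w.findIdx (fun y => y == x)
-- ==== growth diagrams ====

/-- Fomin's forward local rules for a cell of a growth diagram with corners
`λ` (nearest the origin), `μ`, `ν` (adjacent to `λ`) and `ρ` (farthest),
containing a cross iff `cross` holds. -/
def ForwardRule (lam mu nu rho : Ptn) (cross : Prop) : Prop :=
  (mu ≠ nu → rho = unionPtn mu nu) ∧
  (mu = nu → ∀ i, ExpandStep lam mu i → ExpandStep mu rho (i + 1)) ∧
  (lam = mu → mu = nu → ¬ cross → rho = lam) ∧
  (lam = mu → mu = nu → cross → ExpandStep lam rho 0)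

/-- The partial Young tableau corresponding to a chain
`∅ = ε_0, ε_1, …, ε_m` of partitions, each equal to or covering the
previous one: `k` occupies the box added at the `k`-th step. -/
def tabOfChain (m : ℕ) (ε : ℕ → Ptn) : List (List ℕ) :=
  (List.range (ε m).numRows).map (fun i =>
    (List.range m).filterMap (fun k =>
      if ExpandStep (ε k) (ε (k+1)) i then some (k+1) else none))

/-- Correspondence via weights  -/
def WeightCorr {n r : ℕ} (w : Fin r → Letter n) (T : OscTab r) : Prop :=
  ∀ k, k ≤ r → ∀ i : ℕ,
    ((T.entry k).parts i : ℤ) = if h : i < n then wordWt w k ⟨i, h⟩ else 0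

/-- Correspondence via rows of added/deleted boxes  -/
def RowCorr {n r : ℕ} (w : Fin r → Letter n) (T : OscTab r) : Prop :=
  ∀ (k : ℕ) (hk : k < r), ∀ i : Fin n,
    (w ⟨k, hk⟩ = Sum.inl i ↔ ExpandStep (T.entry k) (T.entry (k+1)) (i : ℕ)) ∧
    (w ⟨k, hk⟩ = Sum.inr i ↔ ExpandStep (T.entry (k+1)) (T.entry k) (i : ℕ))


end

/-! Rows below row `n` of `λ` are empty, so the symplectic condition only forbids the entry `1`
in row `n`. Such a `1` would sit in the leftmost cell of that row, which is the last letter of the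
reverse reading word; the lattice condition then gives `β₁ < β₀`, so column `β₁` of `β` has
length one, which is odd. -/

lemma Ptn.numRows_eq_succ {p : Ptn} {n : ℕ} (hn : p.parts n ≠ 0) (hsucc : p.parts (n + 1) = 0) :
    p.numRows = n + 1 :=
  (Nat.find_eq_iff p.finite).2 ⟨hsucc, fun k hk hk0 => hn (by
    have := p.antitone k n (by omega)
    omega)⟩

lemma Ptn.conj_parts_eq_one {p : Ptn} {j : ℕ} (h1 : p.parts 1 ≤ j) (h0 : j < p.parts 0) :
    p.conj.parts j = 1 := by
  have hcol : {i : ℕ | j < p.parts i} = {0} := by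
    ext i
    simp only [Set.mem_ofPred_eq, Set.mem_singleton_iff]
    refine ⟨fun hi => ?_, fun hi => hi ▸ h0⟩
    by_contra hi0
    have := p.antitone 1 i (by omega)
    omega
  show Nat.card {i : ℕ | j < p.parts i} = 1
  rw [hcol, Nat.card_unique]

lemma Ptn.EvenCols.parts_one_eq_parts_zero {p : Ptn} (hev : p.EvenCols) :
    p.parts 1 = p.parts 0 := by
  by_contra hne
  have hlt : p.parts 1 < p.parts 0 := lt_of_le_of_ne (p.antitone 0 1 zero_le_one) hne
  have := hev (p.parts 1)
  rw [Ptn.conj_parts_eq_one le_rfl hlt] at this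
  exact Nat.not_even_one this

lemma IsLatticeWord.count_succ_lt_count_of_getLast? {w : List ℕ} (hw : IsLatticeWord w) {i : ℕ}
    (hlast : w.getLast? = some (i + 1)) : w.count (i + 2) < w.count (i + 1) := by
  obtain ⟨A, rfl⟩ := List.getLast?_eq_some_iff.1 hlast
  have hA := hw A.length i
  rw [List.take_left] at hA
  rw [List.count_append, List.count_append, List.count_singleton_self,
    List.count_cons_of_ne (by omega), List.count_nil]
  omega

lemma getLast?_ne_one_of_isLatticeWord {w : List ℕ} {β : Ptn} (hw : IsLatticeWord w)
    (hwt : HasWeight w β) (hev : β.EvenCols) : w.getLast? ≠ some 1 := fun hlast => by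
  have := hw.count_succ_lt_count_of_getLast? (i := 0) hlast
  rw [hwt 0, hwt 1, hev.parts_one_eq_parts_zero] at this
  exact lt_irrefl _ this

lemma revWord_getLast? {lam mu : Ptn} {n : ℕ} (T : ℕ → ℕ → ℕ) (hl : lam.parts (n + 1) = 0)
    (hn : mu.parts n < lam.parts n) :
    (revWord lam mu T).getLast? = some (T n (mu.parts n)) := by
  obtain ⟨m, hm⟩ : ∃ m, lam.parts n - mu.parts n = m + 1 :=
    ⟨_, (Nat.succ_pred_eq_of_pos (by omega)).symm⟩
  rw [revWord, Ptn.numRows_eq_succ (by omega) hl, List.range_succ, List.map_append,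
    List.map_singleton, List.flatten_append, List.flatten_singleton, hm, List.range_succ,
    List.map_append, List.map_singleton, ← List.append_assoc, List.getLast?_concat]
  congr 2
  omega

lemma IsSkewSSYT.two_le_of_last_row {lam mu beta : Ptn} {n : ℕ} {T : ℕ → ℕ → ℕ}
    (hT : IsSkewSSYT lam mu T) (hw : IsLatticeWord (revWord lam mu T))
    (hwt : HasWeight (revWord lam mu T) beta) (hev : beta.EvenCols)
    (hl : lam.parts (n + 1) = 0) {j : ℕ} (hj : InSkewShape lam mu n j) : 2 ≤ T n j := by
  have hfirst : InSkewShape lam mu n (mu.parts n) := ⟨le_rfl, hj.1.trans_lt hj.2⟩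
  have hle : T n (mu.parts n) ≤ T n j := hT.2.2.2.1 n _ j hfirst hj hj.1
  have hpos : 1 ≤ T n (mu.parts n) := hT.2.2.1 n _ hfirst
  have hne : T n (mu.parts n) ≠ 1 := fun h1 =>
    getLast?_ne_one_of_isLatticeWord hw hwt hev (h1 ▸ revWord_getLast? T hl hfirst.2)
  omega

lemma isSymplecticLR_iff {n : ℕ} {lam mu beta : Ptn} {T : ℕ → ℕ → ℕ}
    (hl : lam.parts (n + 1) = 0) (hev : beta.EvenCols) :
    IsSymplecticLR n lam mu beta T ↔ IsSkewSSYT lam mu T ∧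
      IsLatticeWord (revWord lam mu T) ∧ HasWeight (revWord lam mu T) beta := by
  refine ⟨fun ⟨hT, hw, hwt, _⟩ => ⟨hT, hw, hwt⟩, fun ⟨hT, hw, hwt⟩ => ⟨hT, hw, hwt, hev, ?_⟩⟩
  rintro (_ | i) j hj
  · exact hT.two_le_of_last_row hw hwt hev hl hj
  · have := lam.antitone (n + 1) (n + (i + 1)) (by omega)
    exact absurd hj.2 (by omega)

theorem lrCoeffS_eq_lrCoeffOrd (n : ℕ) (lam mu beta : Ptn)
    (hl : lam.parts (n + 1) = 0) (hev : beta.EvenCols) :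
    lrCoeffS n lam mu beta = lrCoeffOrd lam mu beta :=
  Nat.card_congr (Equiv.subtypeEquivRight fun _ => isSymplecticLR_iff hl hev)
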